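/- In the two-agent opposed-preferences economy, let π = {C₁,…,C_k} be a classification with intervals listed from left to right, and let ⟨p,(x,y)⟩ be a competitive equilibrium of E(π), where x is the bundle of agent 1 and y that of agent 2. Then the markets clear (x_{C_j} + y_{C_j} = λ(C_j) for every j), and there exists an index j* ∈ {1,…,k} such that x_{C_i} = λ(C_i) and y_{C_i} = 0 for every i < j*, and y_{C_j} = λ(C_j) and x_{C_j} = 0 for every j > j*. -/

import Mathlib

open MeasureTheory Set
open scoped ENNReal

noncomputable section

/-- A classification `π = {C₁,…,C_k}` of `[0,1]` into intervals of positive Lebesgue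
measure, listed from left to right. -/
structure OrderedClassification (k : ℕ) where
  F : Fin k → Set ℝ
  isInterval : ∀ j, (F j).OrdConnected
  posMeas : ∀ j, 0 < volume (F j)
  ordered : ∀ j j' : Fin k, j < j' → ∀ s ∈ F j, ∀ t ∈ F j', s < t
  cover : ⋃ j, F j = Set.Icc (0 : ℝ) 1

/-- Lebesgue measure of a commodity, as a real number. -/
def lvol (C : Set ℝ) : ℝ := (volume C).toReal

/-- The evaluation measure induced by a density: `ν(C) = ∫_C f dλ`. -/
def nu (f : ℝ → ℝ) (C : Set ℝ) : ℝ := ∫ t in C, f t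

/-- Linear utility of a tradable bundle for an agent with density `f`:
`V(π,x) = ∑_j (x_j/λ(C_j)) ν(C_j)`. -/
def Vlin {k : ℕ} (P : OrderedClassification k) (f : ℝ → ℝ) (x : Fin k → ℝ) : ℝ :=
  ∑ j, (x j / lvol (P.F j)) * nu f (P.F j)

/-- Competitive equilibrium of the two-agent opposed-preferences economy `E(π)`:
both agents have claim `1/2`; `x` is agent 1's bundle and `y` agent 2's. -/
def IsEqm2 {k : ℕ} (P : OrderedClassification k) (f₁ f₂ : ℝ → ℝ)
    (p x y : Fin k → ℝ) : Prop :=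
  (∀ j, 0 ≤ p j) ∧ (∀ j, 0 ≤ x j) ∧ (∀ j, 0 ≤ y j) ∧
  (∀ j, x j + y j ≤ lvol (P.F j)) ∧
  (∑ j, p j * x j ≤ (1/2) * ∑ j, p j * lvol (P.F j)) ∧
  (∑ j, p j * y j ≤ (1/2) * ∑ j, p j * lvol (P.F j)) ∧
  (∀ z : Fin k → ℝ, (∀ j, 0 ≤ z j) → Vlin P f₁ x < Vlin P f₁ z →
    (1/2) * ∑ j, p j * lvol (P.F j) < ∑ j, p j * z j) ∧
  (∀ z : Fin k → ℝ, (∀ j, 0 ≤ z j) → Vlin P f₂ y < Vlin P f₂ z →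
    (1/2) * ∑ j, p j * lvol (P.F j) < ∑ j, p j * z j)

/-- Opposed preferences: `f₁` is strictly decreasing and `f₂` strictly increasing on
`[0,1]`, both strictly positive. -/
def OpposedPreferences (f₁ f₂ : ℝ → ℝ) : Prop :=
  StrictAntiOn f₁ (Set.Icc 0 1) ∧ StrictMonoOn f₂ (Set.Icc 0 1) ∧
    (∀ t ∈ Set.Icc (0:ℝ) 1, 0 < f₁ t) ∧ (∀ t ∈ Set.Icc (0:ℝ) 1, 0 < f₂ t)

/-!
Both agents have linear utilities in which one unit of good `j` is worth the average of their
density over `C_j`. Each average lies between two values of the density on `C_j`, so the averages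
strictly decrease in `j` for agent 1 and strictly increase for agent 2. Positive marginal utilities
make each agent spend the whole budget at strictly positive prices, and the two budget identities
then force markets to clear. An optimal linear bundle contains only goods of maximal utility per
unit of price: if agent 2 bought some `C_i` and agent 1 some `C_j` with `i < j`, agent 1 would
need `p_j < p_i` and agent 2 `p_i < p_j`. So `j*` can be taken to be the first good agent 2 buys.
-/

section LinearDemand

variable {ι : Type*} [Fintype ι]

def IsLinearDemand (a p : ι → ℝ) (B : ℝ) (w : ι → ℝ) : Prop :=
  0 ≤ w ∧ p ⬝ᵥ w ≤ B ∧ ∀ z : ι → ℝ, 0 ≤ z → a ⬝ᵥ w < a ⬝ᵥ z → B < p ⬝ᵥ z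

namespace IsLinearDemand

variable {a p w : ι → ℝ} {B : ℝ}

theorem dotProduct_le (h : IsLinearDemand a p B w) {z : ι → ℝ} (hz : 0 ≤ z)
    (hpz : p ⬝ᵥ z ≤ B) : a ⬝ᵥ z ≤ a ⬝ᵥ w :=
  not_lt.1 fun hlt => (h.2.2 z hz hlt).not_ge hpz

theorem price_pos (h : IsLinearDemand a p B w) {j : ι} (ha : 0 < a j) : 0 < p j := by
  classical
  by_contra! hp
  have := h.dotProduct_le (z := w + Pi.single j 1) (add_nonneg h.1 (Pi.single_nonneg.2 zero_le_one))
    (by rw [dotProduct_add, dotProduct_single]; linarith [h.2.1])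
  rw [dotProduct_add, dotProduct_single] at this
  linarith

theorem dotProduct_eq (h : IsLinearDemand a p B w) {j : ι} (ha : 0 < a j) : p ⬝ᵥ w = B := by
  classical
  refine h.2.1.antisymm (not_lt.1 fun hlt => ?_)
  have hp := h.price_pos ha
  set ε := (B - p ⬝ᵥ w) / p j
  have hε : 0 < ε := div_pos (sub_pos.2 hlt) hp
  have := h.dotProduct_le (z := w + Pi.single j ε) (add_nonneg h.1 (Pi.single_nonneg.2 hε.le))
    (by rw [dotProduct_add, dotProduct_single, mul_div_cancel₀ _ hp.ne']; linarith)
  rw [dotProduct_add, dotProduct_single] at this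
  linarith [mul_pos ha hε]

theorem div_le_div_of_pos (h : IsLinearDemand a p B w) (ha : ∀ m, 0 < a m) (i : ι) {j : ι}
    (hw : 0 < w j) : a i / p i ≤ a j / p j := by
  classical
  have hpi := h.price_pos (ha i)
  have hpj := h.price_pos (ha j)
  -- trade all of good `j` for good `i` at the same cost
  set δ := w j * p j / p i
  have hδ : 0 ≤ δ := by positivity
  have hz : 0 ≤ w - Pi.single j (w j) + Pi.single i δ := by
    intro m
    have hwm : 0 ≤ w m := h.1 m
    simp only [Pi.add_apply, Pi.sub_apply, Pi.single_apply, Pi.zero_apply]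
    by_cases hm : m = j
    · subst hm
      split_ifs <;> linarith
    · rw [if_neg hm]
      split_ifs <;> linarith
  have hcost : p ⬝ᵥ (w - Pi.single j (w j) + Pi.single i δ) = p ⬝ᵥ w := by
    rw [dotProduct_add, dotProduct_sub, dotProduct_single, dotProduct_single,
      mul_div_cancel₀ _ hpi.ne']
    ring
  have := h.dotProduct_le hz (hcost ▸ h.2.1)
  rw [dotProduct_add, dotProduct_sub, dotProduct_single, dotProduct_single] at this
  rw [div_le_div_iff₀ hpi hpj]
  refine le_of_mul_le_mul_right ?_ hw
  have : a i * (w j * p j) / p i ≤ a j * w j := by rw [mul_div_assoc]; linarith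
  rw [div_le_iff₀ hpi] at this
  linarith

theorem eq_zero_of_pos_of_lt [LinearOrder ι] {b y : ι → ℝ} {B' : ℝ}
    (hw : IsLinearDemand a p B w) (hy : IsLinearDemand b p B' y) (ha : ∀ m, 0 < a m)
    (hb : ∀ m, 0 < b m) (ha_anti : StrictAnti a) (hb_mono : StrictMono b) {i j : ι} (hij : i < j)
    (hyi : 0 < y i) : w j = 0 := by
  by_contra hwj
  have hpi := hw.price_pos (ha i)
  have hpj := hw.price_pos (ha j)
  have hpji : p j < p i := (div_lt_div_iff_of_pos_left (ha i) hpi hpj).1 <|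
    (hw.div_le_div_of_pos ha i ((hw.1 j).lt_of_ne' hwj)).trans_lt
      (div_lt_div_of_pos_right (ha_anti hij) hpj)
  have hpij : p i < p j := (div_lt_div_iff_of_pos_left (hb j) hpj hpi).1 <|
    (hy.div_le_div_of_pos hb j hyi).trans_lt (div_lt_div_of_pos_right (hb_mono hij) hpi)
  exact hpji.not_gt hpij

end IsLinearDemand

theorem eq_of_le_of_dotProduct_eq {p u v : ι → ℝ} (hp : ∀ j, 0 < p j) (huv : u ≤ v)
    (h : p ⬝ᵥ u = p ⬝ᵥ v) : u = v := by
  by_contra hne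
  obtain ⟨j, hj⟩ := (Pi.lt_def.1 (huv.lt_of_ne hne)).2
  exact h.not_lt <| Finset.sum_lt_sum (fun m _ => mul_le_mul_of_nonneg_left (huv m) (hp m).le)
    ⟨j, Finset.mem_univ j, mul_lt_mul_of_pos_left hj (hp j)⟩

end LinearDemand

theorem exists_forall_lt_not_and_forall_gt {α : Type*} [LinearOrder α] [Finite α] [Nonempty α]
    {Q R : α → Prop} (h : ∀ i j, i < j → Q i → R j) :
    ∃ m, (∀ i < m, ¬ Q i) ∧ ∀ j, m < j → R j := by
  by_cases hQ : ∃ i, Q i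
  · obtain ⟨m, hm, hmin⟩ := wellFounded_lt.has_min {i | Q i} hQ
    exact ⟨m, fun i hi hQi => hmin i hQi hi, fun j hj => h m j hj hm⟩
  · simp only [not_exists] at hQ
    obtain ⟨m, hm⟩ := Finite.exists_max (id : α → α)
    exact ⟨m, fun i _ => hQ i, fun j hj => absurd (hm j) (not_le.2 hj)⟩

theorem setAverage_lt_setAverage {α : Type*} [MeasurableSpace α] {μ : Measure α} {f : α → ℝ}
    {s t : Set α} (hs : μ s ≠ 0) (hs' : μ s ≠ ∞) (ht : μ t ≠ 0) (ht' : μ t ≠ ∞)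
    (hfs : IntegrableOn f s μ) (hft : IntegrableOn f t μ) (h : ∀ a ∈ s, ∀ b ∈ t, f a < f b) :
    ⨍ x in s, f x ∂μ < ⨍ x in t, f x ∂μ := by
  obtain ⟨a, ha, hfa⟩ := exists_setAverage_le hs hs' hfs
  obtain ⟨b, hb, hfb⟩ := exists_le_setAverage ht ht' hft
  exact hfa.trans_lt ((h a ha b hb).trans_le hfb)

namespace OrderedClassification

variable {k : ℕ} (P : OrderedClassification k)

theorem subset_Icc (j : Fin k) : P.F j ⊆ Icc 0 1 :=
  P.cover ▸ subset_iUnion P.F j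

theorem volume_ne_top (j : Fin k) : volume (P.F j) ≠ ∞ :=
  measure_ne_top_of_subset (P.subset_Icc j) measure_Icc_lt_top.ne

theorem nonempty_index (P : OrderedClassification k) : Nonempty (Fin k) := by
  have h0 : (0 : ℝ) ∈ ⋃ j, P.F j := P.cover ▸ left_mem_Icc.2 zero_le_one
  exact ⟨(mem_iUnion.1 h0).choose⟩

def avgDensity (f : ℝ → ℝ) (j : Fin k) : ℝ := ⨍ t in P.F j, f t

theorem vlin_eq_dotProduct (f : ℝ → ℝ) (z : Fin k → ℝ) : Vlin P f z = P.avgDensity f ⬝ᵥ z := by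
  simp only [Vlin, avgDensity, dotProduct, setAverage_eq, smul_eq_mul, nu, lvol, measureReal_def]
  exact Finset.sum_congr rfl fun j _ => by ring

theorem avgDensity_pos {f : ℝ → ℝ} (hf : ∀ t ∈ Icc (0 : ℝ) 1, 0 < f t)
    (hint : IntegrableOn f (Icc 0 1)) (j : Fin k) : 0 < P.avgDensity f j := by
  obtain ⟨t, ht, hft⟩ :=
    exists_le_setAverage (P.posMeas j).ne' (P.volume_ne_top j) (hint.mono_set (P.subset_Icc j))
  exact (hf t (P.subset_Icc j ht)).trans_le hft

theorem strictMono_avgDensity {f : ℝ → ℝ} (hf : StrictMonoOn f (Icc 0 1)) :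
    StrictMono (P.avgDensity f) := fun i j hij =>
  have hint := hf.monotoneOn.integrableOn_isCompact isCompact_Icc
  setAverage_lt_setAverage (P.posMeas i).ne' (P.volume_ne_top i) (P.posMeas j).ne'
    (P.volume_ne_top j) (hint.mono_set (P.subset_Icc i)) (hint.mono_set (P.subset_Icc j))
    fun s hs t ht => hf (P.subset_Icc i hs) (P.subset_Icc j ht) (P.ordered i j hij s hs t ht)

theorem strictAnti_avgDensity {f : ℝ → ℝ} (hf : StrictAntiOn f (Icc 0 1)) :
    StrictAnti (P.avgDensity f) := fun i j hij =>
  have hint := hf.antitoneOn.integrableOn_isCompact isCompact_Icc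
  setAverage_lt_setAverage (P.posMeas j).ne' (P.volume_ne_top j) (P.posMeas i).ne'
    (P.volume_ne_top i) (hint.mono_set (P.subset_Icc j)) (hint.mono_set (P.subset_Icc i))
    fun t ht s hs => hf (P.subset_Icc i hs) (P.subset_Icc j ht) (P.ordered i j hij s hs t ht)

end OrderedClassification

open OrderedClassification

/-- in any competitive equilibrium of the two-agent opposed-preferences
economy, markets clear and there is an index `j*` such that agent 1 consumes all of
every commodity to the left of `j*` and agent 2 all of every commodity to the right. -/
theorem opposed_preferences_split (k : ℕ) (P : OrderedClassification k)
    (f₁ f₂ : ℝ → ℝ) (hopp : OpposedPreferences f₁ f₂)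
    (p x y : Fin k → ℝ) (heq : IsEqm2 P f₁ f₂ p x y) :
    (∀ j, x j + y j = lvol (P.F j)) ∧
    ∃ jstar : Fin k,
      (∀ i, i < jstar → x i = lvol (P.F i) ∧ y i = 0) ∧
      (∀ j, jstar < j → y j = lvol (P.F j) ∧ x j = 0) := by
  obtain ⟨hf₁, hf₂, hf₁_pos, hf₂_pos⟩ := hopp
  obtain ⟨-, hx, hy, hxy, hbx, hby, hopt₁, hopt₂⟩ := heq
  simp only [vlin_eq_dotProduct] at hopt₁ hopt₂
  have ha₁ := P.avgDensity_pos hf₁_pos (hf₁.antitoneOn.integrableOn_isCompact isCompact_Icc)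
  have ha₂ := P.avgDensity_pos hf₂_pos (hf₂.monotoneOn.integrableOn_isCompact isCompact_Icc)
  have hdx : IsLinearDemand (P.avgDensity f₁) p _ x := ⟨hx, hbx, hopt₁⟩
  have hdy : IsLinearDemand (P.avgDensity f₂) p _ y := ⟨hy, hby, hopt₂⟩
  have hk : Nonempty (Fin k) := P.nonempty_index
  have hclear : x + y = fun j => lvol (P.F j) := by
    refine eq_of_le_of_dotProduct_eq (fun j => hdx.price_pos (ha₁ j)) hxy ?_
    rw [dotProduct_add, hdx.dotProduct_eq (ha₁ hk.some), hdy.dotProduct_eq (ha₂ hk.some)]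
    simp only [dotProduct]
    ring
  replace hclear (j : Fin k) : x j + y j = lvol (P.F j) := congrFun hclear j
  refine ⟨hclear, ?_⟩
  obtain ⟨m, hleft, hright⟩ := exists_forall_lt_not_and_forall_gt (Q := fun i => 0 < y i)
    (R := fun j => x j = 0) fun i j hij hyi => hdx.eq_zero_of_pos_of_lt hdy ha₁ ha₂
      (P.strictAnti_avgDensity hf₁) (P.strictMono_avgDensity hf₂) hij hyi
  refine ⟨m, fun i hi => ?_, fun j hj => ?_⟩
  · have hyi : y i = 0 := le_antisymm (not_lt.1 (hleft i hi)) (hy i)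
    exact ⟨by linarith [hclear i], hyi⟩
  · have hxj : x j = 0 := hright j hj
    exact ⟨by linarith [hclear j], hxj⟩

end
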